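/- arXiv:1803.07633 — 7 statements merged into one kernel-verified Lean document; each statement's English description precedes it below -/
import Mathlib

section
/- If a subset G of ℕ^ℕ is dominating, then G (with the subspace topology from the product topology) is not Menger. -/
def IsMenger (X : Type*) [TopologicalSpace X] : Prop :=
  ∀ U : ℕ → Set (Set X),
    (∀ n, ∀ s ∈ U n, IsOpen s) → (∀ n, ⋃₀ U n = Set.univ) →
    ∃ V : ℕ → Set (Set X), (∀ n, V n ⊆ U n) ∧ (∀ n, (V n).Finite) ∧
      (⋃ n, ⋃₀ V n) = Set.univ

def Dominating (G : Set (ℕ → ℕ)) : Prop :=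
  ∀ f : ℕ → ℕ, ∃ g ∈ G, ∀ᶠ n in Filter.atTop, f n ≤ g n

/-! Split `ℕ` into the infinite blocks `{⟨N, m⟩ | m ∈ ℕ}`. For a Menger subspace `X` of `ℕ^ℕ` and each
`N`, the Menger property applied to the covers `Uₘ = {{x | x ⟨N, m⟩ ≤ k} | k ∈ ℕ}` picks finitely
many members of each `Uₘ`; as these increase with `k`, that amounts to a bound `b N m` such that
every `x ∈ X` satisfies `x ⟨N, m⟩ ≤ b N m` for some `m`. Since `⟨N, m⟩ ≥ N`, no `x ∈ X` eventually
dominates `⟨N, m⟩ ↦ b N m + 1`. -/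

open Set Filter

theorem Set.Finite.exists_subset_of_subset_range_of_monotone {α ι : Type*} [Preorder ι]
    [IsDirected ι (· ≤ ·)] [Nonempty ι] {s : ι → Set α} (hs : Monotone s) {V : Set (Set α)}
    (hV : V.Finite) (hVs : V ⊆ range s) : ∃ k, ∀ C ∈ V, C ⊆ s k := by
  obtain ⟨t, -, ht, rfl⟩ :=
    exists_subset_image_finite_and.1 ⟨V, by rwa [image_univ], hV, rfl⟩
  obtain ⟨k, hk⟩ := ht.bddAbove
  exact ⟨k, forall_mem_image.2 fun i hi => hs (hk hi)⟩

namespace IsMenger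

variable {X : Type*} [TopologicalSpace X]

theorem exists_forall_exists_le (hX : IsMenger X) (φ : ℕ → X → ℕ)
    (hφ : ∀ m, Continuous (φ m)) : ∃ b : ℕ → ℕ, ∀ x, ∃ m, φ m x ≤ b m := by
  set s : ℕ → ℕ → Set X := fun m k => {x | φ m x ≤ k}
  have hs_mono : ∀ m, Monotone (s m) := fun m _ _ hkl _ hx => le_trans hx hkl
  obtain ⟨V, hVU, hVfin, hVcov⟩ := hX (fun m => range (s m))
    (by rintro m _ ⟨k, rfl⟩; exact (isOpen_discrete (Iic k)).preimage (hφ m))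
    (fun m => sUnion_eq_univ_iff.2 fun x => ⟨_, mem_range_self (φ m x), le_refl (φ m x)⟩)
  choose b hb using fun m =>
    (hVfin m).exists_subset_of_subset_range_of_monotone (hs_mono m) (hVU m)
  refine ⟨b, fun x => ?_⟩
  obtain ⟨m, C, hC, hxC⟩ := mem_iUnion.1 (hVcov ▸ mem_univ x)
  exact ⟨m, hb m C hC hxC⟩

theorem exists_frequently_lt (hX : IsMenger X) (F : X → ℕ → ℕ)
    (hF : ∀ n, Continuous fun x => F x n) : ∃ f : ℕ → ℕ, ∀ x, ∃ᶠ n in atTop, F x n < f n := by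
  choose b hb using fun N =>
    hX.exists_forall_exists_le (fun m x => F x (Nat.pair N m)) (fun m => hF _)
  refine ⟨fun n => b n.unpair.1 n.unpair.2 + 1, fun x => frequently_atTop.2 fun N => ?_⟩
  obtain ⟨m, hm⟩ := hb N x
  exact ⟨Nat.pair N m, Nat.left_le_pair N m,
    by simpa only [Nat.unpair_pair] using Nat.lt_succ_of_le hm⟩

end IsMenger

theorem dominating_not_menger (G : Set (ℕ → ℕ)) (hG : Dominating G) :
    ¬ IsMenger G := by
  intro hM
  obtain ⟨f, hf⟩ := hM.exists_frequently_lt (fun x n => (x : ℕ → ℕ) n)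
    (fun n => (continuous_apply n).comp continuous_subtype_val)
  obtain ⟨g, hg, hfg⟩ := hG f
  obtain ⟨n, hle, hlt⟩ := (hfg.and_frequently (hf ⟨g, hg⟩)).exists
  exact hle.not_gt hlt
end

section
/- A continuous image of a Menger space in ℕ^ℕ is not dominating: if X is Menger and f : X → ℕ^ℕ is continuous, then f(X) is not a dominating subset of ℕ^ℕ. -/
theorem menger_image_not_dominating (X : Type*) [TopologicalSpace X]
    (h : IsMenger X) (f : X → (ℕ → ℕ)) (hf : Continuous f) :
    ¬ Dominating (Set.range f) := by
  classical
  intro hD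
  have main : ∀ j : ℕ, ∃ g : ℕ → ℕ, ∀ x : X, ∃ m : ℕ,
      f x (Nat.pair j m) ≤ g m := by
    intro j
    set U : ℕ → Set (Set X) := fun m =>
      {s | ∃ k : ℕ, s = {x | f x (Nat.pair j m) ≤ k}} with hUdef
    have hopen : ∀ m, ∀ s ∈ U m, IsOpen s := by
      rintro m s ⟨k, rfl⟩
      have hc : Continuous fun x => f x (Nat.pair j m) :=
        (continuous_apply (Nat.pair j m)).comp hf
      have : {x | f x (Nat.pair j m) ≤ k}
          = (fun x => f x (Nat.pair j m)) ⁻¹' (Set.Iic k) := rfl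
      rw [this]
      exact (isOpen_discrete _).preimage hc
    have hcov : ∀ m, ⋃₀ U m = Set.univ := by
      intro m
      ext x
      simp only [Set.mem_sUnion, Set.mem_univ, iff_true]
      exact ⟨{x' | f x' (Nat.pair j m) ≤ f x (Nat.pair j m)},
        ⟨f x (Nat.pair j m), rfl⟩, show f x _ ≤ f x _ from le_refl _⟩
    obtain ⟨V, hVsub, hVfin, hVcov⟩ := h U hopen hcov
    -- extract a bound for each m
    have key : ∀ m : ℕ, ∃ K : ℕ, ∀ s ∈ V m, ∀ x ∈ s, f x (Nat.pair j m) ≤ K := by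
      intro m
      set c : Set X → ℕ := fun s =>
        if hs : ∃ k : ℕ, s = {x | f x (Nat.pair j m) ≤ k} then hs.choose else 0
        with hc
      obtain ⟨K, hK⟩ := ((hVfin m).image c).bddAbove
      refine ⟨K, fun s hs x hx => ?_⟩
      have hks : ∃ k : ℕ, s = {x | f x (Nat.pair j m) ≤ k} := hVsub m hs
      have hsc : s = {x | f x (Nat.pair j m) ≤ c s} := by
        rw [hc]; simp only [dif_pos hks]; exact hks.choose_spec
      have hle : f x (Nat.pair j m) ≤ c s := by
        rw [hsc] at hx; exact hx
      exact hle.trans (hK (Set.mem_image_of_mem c hs))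
    choose g hg using key
    refine ⟨g, fun x => ?_⟩
    have hx : x ∈ ⋃ n, ⋃₀ V n := by rw [hVcov]; trivial
    obtain ⟨_, ⟨m, rfl⟩, s, hsV, hxs⟩ := hx
    exact ⟨m, hg m s hsV x hxs⟩
  choose g hg using main
  obtain ⟨y, ⟨x, rfl⟩, hev⟩ :=
    hD (fun n => g (Nat.unpair n).1 (Nat.unpair n).2 + 1)
  rw [Filter.eventually_atTop] at hev
  obtain ⟨N, hN⟩ := hev
  obtain ⟨m, hm⟩ := hg N x
  have h1 := hN (Nat.pair N m) (Nat.left_le_pair N m)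
  rw [Nat.unpair_pair] at h1
  have h2 : g N m + 1 ≤ f x (Nat.pair N m) := h1
  omega
end

section
/- If X is Lindelöf and projectively Menger, then X is Menger. -/
def IsLindelofCover (X : Type*) [TopologicalSpace X] : Prop :=
  ∀ U : Set (Set X), (∀ s ∈ U, IsOpen s) → ⋃₀ U = Set.univ →
    ∃ V ⊆ U, V.Countable ∧ ⋃₀ V = Set.univ

def ProjectivelyMenger (X : Type*) [TopologicalSpace X] : Prop :=
  ∀ (Z : Type) (_ : TopologicalSpace Z) (_ : SecondCountableTopology Z)
    (f : X → Z), Continuous f → IsMenger (Set.range f)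

/-!
By Lindelöfness each cover `U n` may be replaced by a sequence `u n 0, u n 1, …` of its members.
All these countably many open sets are pulled back from the Sierpiński cube `ℕ × ℕ → Prop` along
the continuous map `x ↦ (p ↦ x ∈ u p.1 p.2)`, whose range is therefore Menger. The Menger selection
for the covers of the range by the subbasic open sets `{g | g (n, k)}` pulls back to a Menger
selection for the `U n`.
-/

open Set Function

theorem IsLindelofCover.exists_seq_subcover {X : Type*} [TopologicalSpace X] [Nonempty X]
    (hL : IsLindelofCover X) {U : Set (Set X)} (hU : ∀ s ∈ U, IsOpen s) (hcov : ⋃₀ U = univ) :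
    ∃ u : ℕ → Set X, (∀ k, u k ∈ U) ∧ ⋃ k, u k = univ := by
  obtain ⟨V, hVU, hVc, hVcov⟩ := hL U hU hcov
  obtain ⟨u, rfl⟩ := hVc.exists_eq_range (.of_sUnion_eq_univ hVcov)
  exact ⟨u, fun k => hVU (mem_range_self k), by rwa [← sUnion_range]⟩

theorem Set.Finite.exists_finset_image_eq_of_subset_range {α β : Type*} {f : α → β} {s : Set β}
    (hs : s.Finite) (hsf : s ⊆ range f) : ∃ t : Finset α, f '' t = s := by
  classical
  obtain ⟨W, rfl⟩ := hs.exists_finset_coe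
  rw [← image_univ, Finset.subset_set_image_iff] at hsf
  obtain ⟨t, -, ht⟩ := hsf
  exact ⟨t, by rw [← ht, Finset.coe_image]⟩

theorem IsMenger.exists_finset_iUnion_eq_univ {Y : Type*} [TopologicalSpace Y] (hY : IsMenger Y)
    (v : ℕ → ℕ → Set Y) (hv : ∀ n k, IsOpen (v n k)) (hcov : ∀ n, ⋃ k, v n k = univ) :
    ∃ F : ℕ → Finset ℕ, ⋃ n, ⋃ k ∈ F n, v n k = univ := by
  obtain ⟨V, hVv, hVfin, hVcov⟩ :=
    hY (fun n => range (v n)) (by rintro n _ ⟨k, rfl⟩; exact hv n k)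
      (fun n => by rw [sUnion_range, hcov])
  choose F hF using fun n => (hVfin n).exists_finset_image_eq_of_subset_range (hVv n)
  refine ⟨F, ?_⟩
  simpa [← hF, sUnion_image] using hVcov

theorem ProjectivelyMenger.exists_finset_iUnion_eq_univ {X : Type*} [TopologicalSpace X]
    (hP : ProjectivelyMenger X) (u : ℕ → ℕ → Set X) (hu : ∀ n k, IsOpen (u n k))
    (hcov : ∀ n, ⋃ k, u n k = univ) :
    ∃ F : ℕ → Finset ℕ, ⋃ n, ⋃ k ∈ F n, u n k = univ := by
  let f : X → (ℕ × ℕ → Prop) := fun x p => x ∈ u p.1 p.2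
  have hf : Continuous f := continuous_pi fun p => isOpen_iff_continuous_mem.mp (hu p.1 p.2)
  let v : ℕ → ℕ → Set (range f) := fun n k => {g | g.1 (n, k)}
  have hv : ∀ n k, IsOpen (v n k) := fun n k =>
    continuous_Prop.mp ((continuous_apply (n, k)).comp continuous_subtype_val)
  have hv_preimage : ∀ n k, rangeFactorization f ⁻¹' v n k = u n k := fun _ _ => rfl
  have hpre := (rangeFactorization_surjective (f := f)).preimage_injective
  obtain ⟨F, hF⟩ := (hP _ _ inferInstance f hf).exists_finset_iUnion_eq_univ v hv fun n =>
    hpre (by simpa [preimage_iUnion, hv_preimage] using hcov n)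
  refine ⟨F, ?_⟩
  simpa [preimage_iUnion, hv_preimage] using congrArg (rangeFactorization f ⁻¹' ·) hF

theorem lindelof_projMenger_implies_menger (X : Type*) [TopologicalSpace X]
    (hL : IsLindelofCover X) (hP : ProjectivelyMenger X) :
    IsMenger X := by
  intro U hU hcov
  cases isEmpty_or_nonempty X
  · exact ⟨fun _ => ∅, fun _ => empty_subset _, fun _ => finite_empty, eq_univ_of_forall isEmptyElim⟩
  choose u huU hucov using fun n => hL.exists_seq_subcover (hU n) (hcov n)
  obtain ⟨F, hF⟩ := hP.exists_finset_iUnion_eq_univ u (fun n k => hU n _ (huU n k)) hucov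
  refine ⟨fun n => u n '' F n, ?_, fun n => (F n).finite_toSet.image _, ?_⟩
  · rintro n _ ⟨k, -, rfl⟩
    exact huU n k
  · simpa [sUnion_image] using hF
end

section
/- If Y is a subspace of a Tychonoff cube [0,1]^A such that for every countable B ⊆ A the canonical projection π_B : [0,1]^A → [0,1]^B maps Y onto all of [0,1]^B, then Y is pseudocompact. -/
/-!
Suppose `g` is unbounded on `Y`, say `n < |g yₙ|`. Each of these inequalities persists on a
neighbourhood of `yₙ` controlled by finitely many coordinates `Fₙ`, so all of them are controlled
by the countable set `B = ⋃ Fₙ`. A cluster point of `(yₙ)` in the compact cube is realised on `B`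
by some `y₀ ∈ Y`. Near `y₀` we have `|g| < |g y₀| + 1`, again on a neighbourhood controlled by
finitely many coordinates `F`; since `Y` projects onto `[0,1]^(B ∪ F)`, some `z ∈ Y` copies a
large-index `yₘ` on `B` and `y₀` on `F \ B`, so `m < |g z| < |g y₀| + 1`, which is absurd.
-/

open Set Filter Topology

section ProjectionsOnto

variable {A : Type*} {X : A → Type*} [∀ a, TopologicalSpace (X a)]

theorem exists_finite_forall_mem_of_mem_nhds_subtype_pi {Y : Set (∀ a, X a)} {y : Y} {U : Set Y}
    (hU : U ∈ 𝓝 y) :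
    ∃ F : Set A, F.Finite ∧ ∃ u : ∀ a, Set (X a), (∀ a, u a ∈ 𝓝 (y.1 a)) ∧
      ∀ z : Y, (∀ a ∈ F, z.1 a ∈ u a) → z ∈ U := by
  rw [nhds_subtype] at hU
  obtain ⟨t, ht, htU⟩ := hU
  rw [nhds_pi, Filter.mem_pi] at ht
  obtain ⟨F, hF, u, hu, hFt⟩ := ht
  exact ⟨F, hF, u, hu, fun z hz => htU (hFt hz)⟩

theorem exists_forall_mem_nhds_frequently_eqOn_of_surjOn_domRestrict [∀ a, CompactSpace (X a)]
    {Y : Set (∀ a, X a)} (hY : ∀ B : Set A, B.Countable → SurjOn B.domRestrict Y univ)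
    {ι : Type*} {l : Filter ι} [l.NeBot] (y : ι → Y) {B : Set A} (hB : B.Countable) :
    ∃ y₀ : Y, ∀ U ∈ 𝓝 y₀, ∃ᶠ i in l, ∃ z ∈ U, ∀ a ∈ B, z.1 a = (y i).1 a := by
  classical
  obtain ⟨p, -, hp⟩ := isCompact_univ.exists_clusterPt
    (f := map (fun i => (y i).1) l) (le_principal_iff.mpr univ_mem)
  obtain ⟨y₀, hy₀Y, hy₀p⟩ := hY B hB (mem_univ (B.domRestrict p))
  refine ⟨⟨y₀, hy₀Y⟩, fun U hU => ?_⟩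
  obtain ⟨F, hF, u, hu, hFU⟩ := exists_finite_forall_mem_of_mem_nhds_subtype_pi hU
  have hW : (F ∩ B).pi u ∈ 𝓝 p := set_pi_mem_nhds (hF.subset inter_subset_left)
    fun a ha => by
      have hpa : y₀ a = p a := congrFun hy₀p ⟨a, ha.2⟩
      exact hpa ▸ hu a
  refine (mapClusterPt_iff_frequently.mp hp _ hW).mono fun i hi => ?_
  obtain ⟨z, hzY, hz⟩ := hY (B ∪ F) (hB.union hF.countable)
    (mem_univ ((B ∪ F).domRestrict (B.piecewise (y i).1 y₀)))
  have hz_eq {a : A} (ha : a ∈ B ∪ F) : z a = B.piecewise (y i).1 y₀ a := congrFun hz ⟨a, ha⟩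
  refine ⟨⟨z, hzY⟩, hFU _ fun a ha => ?_, fun a ha => ?_⟩
  · change z a ∈ u a
    by_cases haB : a ∈ B
    · rw [hz_eq (.inl haB), piecewise_eq_of_mem _ _ _ haB]
      exact hi a ⟨ha, haB⟩
    · rw [hz_eq (.inr ha), piecewise_eq_of_notMem _ _ _ haB]
      exact mem_of_mem_nhds (hu a)
  · change z a = _
    rw [hz_eq (.inl ha), piecewise_eq_of_mem _ _ _ ha]

theorem exists_forall_abs_le_of_surjOn_domRestrict [∀ a, CompactSpace (X a)]
    {Y : Set (∀ a, X a)} (hY : ∀ B : Set A, B.Countable → SurjOn B.domRestrict Y univ)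
    (g : C(Y, ℝ)) : ∃ M, ∀ y : Y, |g y| ≤ M := by
  by_contra! hg
  choose y hy using fun n : ℕ => hg n
  have hlarge (n : ℕ) : {w : Y | (n : ℝ) < |g w|} ∈ 𝓝 (y n) :=
    (isOpen_lt continuous_const (by fun_prop)).mem_nhds (hy n)
  choose F hF u hu hFU using fun n => exists_finite_forall_mem_of_mem_nhds_subtype_pi (hlarge n)
  obtain ⟨y₀, hy₀⟩ := exists_forall_mem_nhds_frequently_eqOn_of_surjOn_domRestrict hY
    (l := atTop) y (countable_iUnion fun n => (hF n).countable)
  have hsmall : {w : Y | |g w| < |g y₀| + 1} ∈ 𝓝 y₀ :=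
    (isOpen_lt (by fun_prop) continuous_const).mem_nhds
      (show |g y₀| < |g y₀| + 1 from lt_add_one _)
  obtain ⟨N, hN⟩ := exists_nat_ge (|g y₀| + 1)
  obtain ⟨m, ⟨z, hz_small, hz_eq⟩, hNm⟩ :=
    ((hy₀ _ hsmall).and_eventually (eventually_ge_atTop N)).exists
  have hz_large : (m : ℝ) < |g z| :=
    hFU m z fun a ha => hz_eq a (mem_iUnion_of_mem m ha) ▸ mem_of_mem_nhds (hu m a)
  have hNm' : (N : ℝ) ≤ m := by exact_mod_cast hNm
  linarith [show |g z| < |g y₀| + 1 from hz_small]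

end ProjectionsOnto

theorem projections_onto_implies_pseudocompact (A : Type*)
    (Y : Set (A → unitInterval))
    (h : ∀ B : Set A, B.Countable → ∀ h0 : B → unitInterval,
      ∃ y ∈ Y, ∀ b : B, y ↑b = h0 b) :
    ∀ g : C(Y, ℝ), ∃ M, ∀ y : Y, |g y| ≤ M := by
  refine exists_forall_abs_le_of_surjOn_domRestrict fun B hB x _ => ?_
  obtain ⟨y, hyY, hyx⟩ := h B hB x
  exact ⟨y, hyY, funext hyx⟩
end

section
/- For a family λ of nonempty subsets of a Tychonoff space X, the space C_λ(X) with the λ-open topology is Hausdorff if and only if λ is a π-network for X. -/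
def lambdaOpenTopology (X : Type*) [TopologicalSpace X] (lam : Set (Set X)) :
    TopologicalSpace C(X, ℝ) :=
  .generateFrom {S | ∃ F ∈ lam, ∃ U : Set ℝ, IsOpen U ∧ S = {f : C(X, ℝ) | f '' F ⊆ U}}

theorem hausdorff_iff_piNetwork (X : Type*) [TopologicalSpace X] [T35Space X]
    (lam : Set (Set X)) (hne : ∀ A ∈ lam, A.Nonempty) :
    @T2Space C(X, ℝ) (lambdaOpenTopology X lam) ↔
      ∀ U : Set X, IsOpen U → U.Nonempty → ∃ A ∈ lam, A ⊆ U := by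
  letI τ := lambdaOpenTopology X lam
  constructor
  · intro h2 U hU ⟨x₀, hx₀⟩
    by_contra hcon
    push_neg at hcon
    -- get f : X → I with f x₀ = 0, f = 1 on Uᶜ
    obtain ⟨f, hf, hfx, hfK⟩ := CompletelyRegularSpace.completely_regular x₀ Uᶜ
      hU.isClosed_compl (by simpa using hx₀)
    set F : C(X, ℝ) := ⟨fun x => (f x : ℝ), continuous_subtype_val.comp hf⟩ with hF
    set G : C(X, ℝ) := ⟨fun _ => (1 : ℝ), continuous_const⟩ with hG
    have hFG : F ≠ G := by
      intro h
      have := ContinuousMap.congr_fun h x₀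
      simp [hF, hG, hfx] at this
    obtain ⟨V₁, V₂, hV₁, hV₂, hFV₁, hGV₂, hdisj⟩ := @t2_separation _ τ _ _ _ hFG
    -- every τ-open set containing F contains G
    have key : ∀ S : Set C(X, ℝ), τ.IsOpen S → F ∈ S → G ∈ S := by
      intro S hS
      induction hS with
      | basic S hSmem =>
        obtain ⟨A, hA, W, hW, rfl⟩ := hSmem
        intro hFS
        obtain ⟨a, haA, haU⟩ := Set.not_subset.mp (hcon A hA)
        have h1 : (1 : ℝ) ∈ W := by
          have := hFS ⟨a, haA, rfl⟩
          have hfa : f a = 1 := hfK haU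
          simpa [hF, hfa] using this
        intro y hy
        obtain ⟨b, _, rfl⟩ := hy
        simpa [hG] using h1
      | univ => exact fun _ => trivial
      | inter S T _ _ ihS ihT => exact fun h => ⟨ihS h.1, ihT h.2⟩
      | sUnion 𝒮 _ ih => rintro ⟨S, hS, hFS⟩; exact ⟨S, hS, ih S hS hFS⟩
    have : G ∈ V₁ := key V₁ hV₁ hFV₁
    exact hdisj.ne_of_mem this hGV₂ rfl
  · intro hpi
    refine @T2Space.mk _ τ ?_
    intro f g hfg
    have : ∃ x, f x ≠ g x := by
      by_contra h
      push_neg at h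
      exact hfg (ContinuousMap.ext h)
    obtain ⟨x, hx⟩ := this
    obtain ⟨V, W, hV, hW, hfV, hgW, hVW⟩ := t2_separation hx
    have hO : IsOpen (f ⁻¹' V ∩ g ⁻¹' W) :=
      (hV.preimage f.continuous).inter (hW.preimage g.continuous)
    obtain ⟨A, hA, hAO⟩ := hpi _ hO ⟨x, hfV, hgW⟩
    refine ⟨{h : C(X, ℝ) | h '' A ⊆ V}, {h : C(X, ℝ) | h '' A ⊆ W},
      TopologicalSpace.GenerateOpen.basic _ ⟨A, hA, V, hV, rfl⟩,
      TopologicalSpace.GenerateOpen.basic _ ⟨A, hA, W, hW, rfl⟩,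
      ?_, ?_, ?_⟩
    · rintro y ⟨a, ha, rfl⟩; exact (hAO ha).1
    · rintro y ⟨a, ha, rfl⟩; exact (hAO ha).2
    · rw [Set.disjoint_left]
      rintro h h₁ h₂
      obtain ⟨a, ha⟩ := hne A hA
      exact Set.disjoint_left.mp hVW (h₁ ⟨a, ha, rfl⟩) (h₂ ⟨a, ha, rfl⟩)
end

section
/- Let X be a Tychonoff space, Y ⊆ X. If D and B are disjoint countable subsets of Y and X is b_Y-discrete (every countable subset of Y is closed in Y and C*-embedded in X), then there exist disjoint zero-sets Z_D, Z_B of X with D ⊆ Z_D and B ⊆ Z_B. -/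
/-! Since `D` and `B` are closed in `Y`, the set `B` is clopen in `D ∪ B`, so its indicator is a
bounded continuous function on `D ∪ B`. Extending it to `g : C(X, ℝ)`, the zero sets of `g` and
`g - 1` are disjoint and contain `D` and `B` respectively. -/

def CStarEmbedded (X : Type*) [TopologicalSpace X] (S : Set X) : Prop :=
  ∀ f : C(S, ℝ), (∃ M, ∀ s, |f s| ≤ M) → ∃ g : C(X, ℝ), ∀ s : S, g ↑s = f s

def BDiscreteOn (X : Type*) [TopologicalSpace X] (Y : Set X) : Prop :=
  ∀ S : Set X, S ⊆ Y → S.Countable →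
    IsClosed ((Subtype.val ⁻¹' S : Set Y)) ∧ CStarEmbedded X S

open Set

theorem BDiscreteOn.isClosed_preimage_val {X : Type*} [TopologicalSpace X] {Y S D : Set X}
    (hb : BDiscreteOn X Y) (hSY : S ⊆ Y) (hDY : D ⊆ Y) (hDc : D.Countable) :
    IsClosed (Subtype.val ⁻¹' D : Set S) :=
  (hb D hDY hDc).1.preimage (continuous_inclusion hSY)

theorem isClopen_preimage_val_right_of_disjoint {X : Type*} [TopologicalSpace X] {D B : Set X}
    (hdisj : Disjoint D B) (hD : IsClosed (Subtype.val ⁻¹' D : Set ↥(D ∪ B)))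
    (hB : IsClosed (Subtype.val ⁻¹' B : Set ↥(D ∪ B))) :
    IsClopen (Subtype.val ⁻¹' B : Set ↥(D ∪ B)) := by
  refine ⟨hB, ?_⟩
  have hcompl : (Subtype.val ⁻¹' B : Set ↥(D ∪ B)) = (Subtype.val ⁻¹' D)ᶜ := by
    ext ⟨x, hx⟩
    exact ⟨fun hxB hxD => hdisj.notMem_of_mem_left hxD hxB, hx.resolve_left⟩
  rw [hcompl]
  exact hD.isOpen_compl

theorem CStarEmbedded.exists_eqOn_zero_eqOn_one {X : Type*} [TopologicalSpace X] {D B : Set X}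
    (h : CStarEmbedded X (D ∪ B)) (hdisj : Disjoint D B)
    (hD : IsClosed (Subtype.val ⁻¹' D : Set ↥(D ∪ B)))
    (hB : IsClosed (Subtype.val ⁻¹' B : Set ↥(D ∪ B))) :
    ∃ g : C(X, ℝ), EqOn g 0 D ∧ EqOn g 1 B := by
  set T : Set ↥(D ∪ B) := Subtype.val ⁻¹' B
  have hT : IsClopen T := isClopen_preimage_val_right_of_disjoint hdisj hD hB
  obtain ⟨g, hg⟩ := h ⟨T.indicator 1, hT.continuous_indicator continuous_const⟩
    ⟨1, fun s => by by_cases hs : s ∈ T <;> simp [hs]⟩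
  refine ⟨g, fun x hxD => ?_, fun x hxB => ?_⟩
  · have hxT : (⟨x, Or.inl hxD⟩ : ↥(D ∪ B)) ∉ T := hdisj.notMem_of_mem_left hxD
    simpa [hxT] using hg ⟨x, Or.inl hxD⟩
  · have hxT : (⟨x, Or.inr hxB⟩ : ↥(D ∪ B)) ∈ T := hxB
    simpa [hxT] using hg ⟨x, Or.inr hxB⟩

theorem bDiscrete_separating_zero_sets_general (X : Type*) [TopologicalSpace X]
    (Y D B : Set X) (hDY : D ⊆ Y) (hBY : B ⊆ Y)
    (hDc : D.Countable) (hBc : B.Countable) (hdisj : Disjoint D B)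
    (hb : BDiscreteOn X Y) :
    ∃ f g : C(X, ℝ), Disjoint (f ⁻¹' {0}) (g ⁻¹' {0}) ∧
      D ⊆ f ⁻¹' {0} ∧ B ⊆ g ⁻¹' {0} := by
  have hSY : D ∪ B ⊆ Y := union_subset hDY hBY
  obtain ⟨g, hgD, hgB⟩ := (hb (D ∪ B) hSY (hDc.union hBc)).2.exists_eqOn_zero_eqOn_one hdisj
    (hb.isClosed_preimage_val hSY hDY hDc) (hb.isClosed_preimage_val hSY hBY hBc)
  refine ⟨g, g - 1, ?_, fun x hx => hgD hx, fun x hx => ?_⟩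
  · refine disjoint_left.2 fun x (hx : g x = 0) (hx' : g x - 1 = 0) => ?_
    simp [hx] at hx'
  · simp [hgB hx]

theorem bDiscrete_separating_zero_sets (X : Type*) [TopologicalSpace X] [T35Space X]
    (Y D B : Set X) (hDY : D ⊆ Y) (hBY : B ⊆ Y)
    (hDc : D.Countable) (hBc : B.Countable) (hdisj : Disjoint D B)
    (hb : BDiscreteOn X Y) :
    ∃ f g : C(X, ℝ), Disjoint (f ⁻¹' {0}) (g ⁻¹' {0}) ∧
      D ⊆ f ⁻¹' {0} ∧ B ⊆ g ⁻¹' {0} :=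
  bDiscrete_separating_zero_sets_general X Y D B hDY hBY hDc hBc hdisj hb
end

section
/- If X is a Tychonoff space, Y ⊆ X is dense, and C_p(Y|X) is projectively Menger, then X is pseudocompact. -/
def restrictSet (X : Type*) [TopologicalSpace X] (Y : Set X) : Set (Y → ℝ) :=
  {g | ∃ f : C(X, ℝ), g = fun y : Y => f ↑y}

/-!
Suppose `f ∈ C(X)` is unbounded and pick `yₙ ∈ Y` with `n ≤ |f yₙ|`. Evaluation at the `yₙ` maps
`C_p(Y|X)` continuously into `ℝ^ℕ`, so its image is Menger, and the Menger property applied to the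
covers `{p | pₙ < j}` (`j ∈ ℕ`) yields one sequence `N` such that every `g` has some `n` with
`g yₙ < Nₙ`. A continuous `φ : ℝ → ℝ` with `Nₙ ≤ φ t` for `t ≥ n` then makes `φ ∘ |f|` violate this.
-/

open Set

/-- The `k`-th ramp rises from `0` at `t = k - 1` to `1` at `t = k`; near any `t` only finitely
many ramps are nonzero, so the sum is locally finite. -/
noncomputable def rampSum (a : ℕ → ℝ) (t : ℝ) : ℝ :=
  ∑' k : ℕ, a k * min 1 (max (t + 1 - k) 0)

theorem rampSum_eq_sum (a : ℕ → ℝ) {t : ℝ} {K : ℕ} (ht : t ≤ K) :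
    rampSum a t = ∑ k ∈ Finset.range (K + 1), a k * min 1 (max (t + 1 - k) 0) := by
  refine tsum_eq_sum fun k hk => ?_
  have hKk : (K : ℝ) + 1 ≤ k := by exact_mod_cast not_lt.1 (Finset.mem_range.not.1 hk)
  rw [max_eq_right (by linarith), min_eq_right zero_le_one, mul_zero]

theorem continuous_rampSum (a : ℕ → ℝ) : Continuous (rampSum a) := by
  refine continuous_iff_continuousAt.2 fun t => ?_
  obtain ⟨K, hK⟩ := exists_nat_gt t
  have hsum : Continuous fun s : ℝ =>
      ∑ k ∈ Finset.range (K + 1), a k * min 1 (max (s + 1 - k) 0) := by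
    fun_prop
  refine hsum.continuousAt.congr ?_
  filter_upwards [Iio_mem_nhds hK] with s hs
  exact (rampSum_eq_sum a (le_of_lt hs)).symm

theorem le_rampSum {a : ℕ → ℝ} (ha : ∀ k, 0 ≤ a k) {n : ℕ} {t : ℝ} (hnt : n ≤ t) :
    a n ≤ rampSum a t := by
  have hn : n ∈ Finset.range (⌈t⌉₊ + 1) := by
    rw [Finset.mem_range, Nat.lt_succ_iff]
    exact_mod_cast hnt.trans (Nat.le_ceil t)
  rw [rampSum_eq_sum a (Nat.le_ceil t)]
  calc a n = a n * min 1 (max (t + 1 - n) 0) := by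
        rw [max_eq_left (by linarith), min_eq_left (by linarith), mul_one]
    _ ≤ _ := Finset.single_le_sum (f := fun k : ℕ => a k * min 1 (max (t + 1 - k) 0))
        (fun k _ => mul_nonneg (ha k) (by positivity)) hn

theorem exists_continuous_forall_le_of_natCast_le (N : ℕ → ℝ) :
    ∃ φ : ℝ → ℝ, Continuous φ ∧ ∀ (n : ℕ) (t : ℝ), n ≤ t → N n ≤ φ t :=
  ⟨rampSum fun k => max (N k) 0, continuous_rampSum _, fun _ _ hnt =>
    (le_max_left _ _).trans (le_rampSum (fun _ => le_max_right _ _) hnt)⟩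

theorem exists_sUnion_subset_of_subset_range {ι α : Type*} [Preorder ι] [IsDirected ι (· ≤ ·)]
    [Nonempty ι] {F : ι → Set α} (hF : Monotone F) {V : Set (Set α)} (hV : V.Finite)
    (hVF : V ⊆ range F) : ∃ i, ⋃₀ V ⊆ F i := by
  rw [← image_univ] at hVF
  obtain ⟨s, -, hs, rfl⟩ := exists_subset_image_finite_and.1 ⟨V, hVF, hV, rfl⟩
  obtain ⟨i, hi⟩ := hs.bddAbove
  exact ⟨i, sUnion_subset <| forall_mem_image.2 fun j hj => hF (hi hj)⟩

theorem IsMenger.exists_forall_exists_lt {X : Type*} [TopologicalSpace X] (hX : IsMenger X)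
    (f : ℕ → X → ℝ) (hf : ∀ n, Continuous (f n)) : ∃ N : ℕ → ℝ, ∀ x, ∃ n, f n x < N n := by
  set U : ℕ → ℕ → Set X := fun n j => {x | f n x < j}
  have hU_mono : ∀ n, Monotone (U n) := fun n i j hij x (hx : f n x < i) =>
    show f n x < j from hx.trans_le (Nat.cast_le.2 hij)
  obtain ⟨V, hVU, hV, hcover⟩ := hX (fun n => range (U n))
    (fun n => forall_mem_range.2 fun j => isOpen_lt (hf n) continuous_const)
    (fun n => sUnion_range (U n) ▸ eq_univ_of_forall fun x =>
      mem_iUnion.2 (exists_nat_gt (f n x)))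
  choose N hN using fun n => exists_sUnion_subset_of_subset_range (hU_mono n) (hV n) (hVU n)
  refine ⟨fun n => (N n : ℝ), fun x => ?_⟩
  obtain ⟨n, hn⟩ := mem_iUnion.1 (hcover ▸ mem_univ x)
  exact ⟨n, hN n hn⟩

theorem ProjectivelyMenger.exists_forall_exists_lt {X : Type*} [TopologicalSpace X]
    (hX : ProjectivelyMenger X) (f : ℕ → X → ℝ) (hf : ∀ n, Continuous (f n)) :
    ∃ N : ℕ → ℝ, ∀ x, ∃ n, f n x < N n := by
  have hΦ : Continuous fun x n => f n x := continuous_pi hf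
  obtain ⟨N, hN⟩ := (hX (ℕ → ℝ) inferInstance inferInstance _ hΦ).exists_forall_exists_lt
    (fun n p => p.1 n) (fun n => (continuous_apply n).comp continuous_subtype_val)
  exact ⟨N, fun x => hN ⟨_, x, rfl⟩⟩

theorem Dense.exists_mem_lt_abs {X : Type*} [TopologicalSpace X] {Y : Set X} (hY : Dense Y)
    {f : C(X, ℝ)} (hf : ¬∃ M, ∀ x, |f x| ≤ M) (r : ℝ) : ∃ y ∈ Y, r < |f y| := by
  push Not at hf
  obtain ⟨x, hx⟩ := hf r
  have hopen : IsOpen {x | r < |f x|} := isOpen_lt continuous_const (by fun_prop)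
  obtain ⟨y, hyr, hyY⟩ := hY.inter_open_nonempty _ hopen ⟨x, hx⟩
  exact ⟨y, hyY, hyr⟩

theorem projMenger_Cp_implies_pseudocompact_general (X : Type*) [TopologicalSpace X]
    (Y : Set X) (hY : Dense Y)
    (h : ProjectivelyMenger (restrictSet X Y)) :
    ∀ f : C(X, ℝ), ∃ M, ∀ x, |f x| ≤ M := by
  intro f
  by_contra hunbdd
  choose y hyY hy using fun n : ℕ => hY.exists_mem_lt_abs hunbdd n
  obtain ⟨N, hN⟩ := h.exists_forall_exists_lt (fun n g => g.1 ⟨y n, hyY n⟩)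
    fun n => (continuous_apply _).comp continuous_subtype_val
  obtain ⟨φ, hφ, hφN⟩ := exists_continuous_forall_le_of_natCast_le N
  let g : C(X, ℝ) := ⟨fun x => φ |f x|, by fun_prop⟩
  obtain ⟨n, hn⟩ := hN ⟨_, g, rfl⟩
  exact hn.not_ge (hφN n _ (hy n).le)

theorem projMenger_Cp_implies_pseudocompact (X : Type*) [TopologicalSpace X] [T35Space X]
    (Y : Set X) (hY : Dense Y)
    (h : ProjectivelyMenger (restrictSet X Y)) :
    ∀ f : C(X, ℝ), ∃ M, ∀ x, |f x| ≤ M :=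
  projMenger_Cp_implies_pseudocompact_general X Y hY h
end
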